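/- arXiv:1102.1746 — 7 statements merged into one kernel-verified Lean document; each statement's English description precedes it below -/
import Mathlib

section
/- If a binary string s over alphabet {a,b} has substrings of length m with Parikh vectors (x1, m-x1) and (x2, m-x2) where x1 ≤ x2, then for every y with x1 ≤ y ≤ x2, the Parikh vector (y, m-y) also occurs in s (i.e., s has a substring of length m containing exactly y letters a). -/
private lemma ivt_up (f : ℕ → ℕ) (hstep : ∀ k, f (k+1) ≤ f k + 1) (y : ℕ) :
    ∀ d a, f a ≤ y → y ≤ f (a + d) → ∃ c ≤ d, f (a + c) = y := by
  intro d
  induction d with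
  | zero => intro a h1 h2; simp only [Nat.add_zero] at h2; exact ⟨0, le_refl _, by simp only [Nat.add_zero]; omega⟩
  | succ d ih =>
    intro a h1 h2
    rcases eq_or_lt_of_le h1 with h | h
    · exact ⟨0, Nat.zero_le _, by simpa using h⟩
    · have h1' : f (a+1) ≤ y := le_trans (hstep a) h
      have h2' : y ≤ f (a + 1 + d) := by
        have : a + 1 + d = a + (d + 1) := by ring
        rw [this]; exact h2
      obtain ⟨c, hc, hfc⟩ := ih (a+1) h1' h2'
      exact ⟨c + 1, by omega, by rwa [show a + (c+1) = a + 1 + c by ring]⟩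

private lemma ivt_down (f : ℕ → ℕ) (hstep : ∀ k, f k ≤ f (k+1) + 1) (y : ℕ) :
    ∀ d a, y ≤ f a → f (a + d) ≤ y → ∃ c ≤ d, f (a + c) = y := by
  intro d
  induction d with
  | zero => intro a h1 h2; simp only [Nat.add_zero] at h2; exact ⟨0, le_refl _, by simp only [Nat.add_zero]; omega⟩
  | succ d ih =>
    intro a h1 h2
    rcases eq_or_lt_of_le h1 with h | h
    · exact ⟨0, Nat.zero_le _, by simpa using h.symm⟩
    · have h1' : y ≤ f (a+1) := by have := hstep a; omega
      have h2' : f (a + 1 + d) ≤ y := by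
        have : a + 1 + d = a + (d + 1) := by ring
        rw [this]; exact h2
      obtain ⟨c, hc, hfc⟩ := ih (a+1) h1' h2'
      exact ⟨c + 1, by omega, by rwa [show a + (c+1) = a + 1 + c by ring]⟩

private lemma count_add_count (l : List Bool) : l.count true + l.count false = l.length := by
  induction l with
  | nil => simp
  | cons b t ih => cases b <;> simp [List.count_cons] <;> omega

private lemma window_step (s : List Bool) (m j : ℕ) (hm : 1 ≤ m) (hj : j + 1 + m ≤ s.length) :
    ((s.drop j).take m).count true ≤ ((s.drop (j+1)).take m).count true + 1 ∧
    ((s.drop (j+1)).take m).count true ≤ ((s.drop j).take m).count true + 1 := by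
  have hjlt : j < s.length := by omega
  have hd : s.drop j = s[j] :: s.drop (j+1) := List.drop_eq_getElem_cons hjlt
  obtain ⟨m', rfl⟩ : ∃ m', m = m' + 1 := ⟨m - 1, by omega⟩
  have hw1 : (s.drop j).take (m'+1) = s[j] :: (s.drop (j+1)).take m' := by
    rw [hd, List.take_succ_cons]
  have hlen : m' < (s.drop (j+1)).length := by
    rw [List.length_drop]; omega
  have hw2 : (s.drop (j+1)).take (m'+1) = (s.drop (j+1)).take m' ++ [(s.drop (j+1))[m']] := by
    rw [List.take_succ, List.getElem?_eq_getElem hlen]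
    rfl
  rw [hw1, hw2]
  set mid := (s.drop (j+1)).take m'
  cases s[j] <;> cases (s.drop (j+1))[m'] <;>
    simp [List.count_cons, List.count_append] <;> omega

/-- If a binary string `s` (letter `a` = `true`, letter `b` = `false`) has substrings of
length `m` with Parikh vectors `(x1, m - x1)` and `(x2, m - x2)`, then for every `y` with
`x1 ≤ y ≤ x2` the Parikh vector `(y, m - y)` also occurs in `s`. -/
theorem stmt0 (s : List Bool) (m : ℕ) (hm : 1 ≤ m) (hmn : m ≤ s.length)
    (x1 x2 y : ℕ)
    (h1 : ∃ i, i + m ≤ s.length ∧ ((s.drop i).take m).count true = x1)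
    (h2 : ∃ i, i + m ≤ s.length ∧ ((s.drop i).take m).count true = x2)
    (hy1 : x1 ≤ y) (hy2 : y ≤ x2) :
    ∃ i, i + m ≤ s.length ∧ ((s.drop i).take m).count true = y ∧
      ((s.drop i).take m).count false = m - y := by
  set n := s.length with hn
  obtain ⟨i1, hi1, hc1⟩ := h1
  obtain ⟨i2, hi2, hc2⟩ := h2
  -- clamped window count
  set g : ℕ → ℕ := fun i => ((s.drop (min i (n - m))).take m).count true with hg
  have hg1 : g i1 = x1 := by
    rw [hg]; simp only [min_eq_left (by omega : i1 ≤ n - m)]; exact hc1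
  have hg2 : g i2 = x2 := by
    rw [hg]; simp only [min_eq_left (by omega : i2 ≤ n - m)]; exact hc2
  have hstep : ∀ k, g k ≤ g (k+1) + 1 ∧ g (k+1) ≤ g k + 1 := by
    intro k
    by_cases hk : k + 1 ≤ n - m
    · have hk' : k + 1 + m ≤ n := by omega
      have h1 : min k (n - m) = k := min_eq_left (by omega)
      have h2 : min (k+1) (n - m) = k + 1 := min_eq_left hk
      have := window_step s m k hm hk'
      rw [hg]; simp only [h1, h2]; exact this
    · have h1 : min k (n - m) = n - m := min_eq_right (by omega)
      have h2 : min (k+1) (n - m) = n - m := min_eq_right (by omega)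
      rw [hg]; simp only [h1, h2]; omega
  -- find witness index
  have key : ∃ i ≤ n - m, g i = y := by
    rcases le_total i1 i2 with h | h
    · obtain ⟨c, hc, hfc⟩ := ivt_up g (fun k => (hstep k).2) y (i2 - i1) i1
        (by omega) (by rw [show i1 + (i2 - i1) = i2 by omega]; omega)
      exact ⟨i1 + c, by omega, hfc⟩
    · obtain ⟨c, hc, hfc⟩ := ivt_down g (fun k => (hstep k).1) y (i1 - i2) i2
        (by omega) (by rw [show i2 + (i1 - i2) = i1 by omega]; omega)
      exact ⟨i2 + c, by omega, hfc⟩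
  obtain ⟨i, hi, hgi⟩ := key
  have hmin : min i (n - m) = i := min_eq_left hi
  rw [hg] at hgi; simp only [hmin] at hgi
  refine ⟨i, by omega, hgi, ?_⟩
  have hlen : ((s.drop i).take m).length = m := by
    rw [List.length_take, List.length_drop]; omega
  have := count_add_count ((s.drop i).take m)
  omega
end

section
/- For a binary string s of length n, the set of Parikh vectors of length-m substrings of s equals {(x, m-x) : pmin(m) ≤ x ≤ pmax(m)}, where pmin(m) and pmax(m) are respectively the minimum and maximum number of a's over all substrings of s of length m. Consequently, a query (x,y) with x+y = m occurs in s if and only if pmin(m) ≤ x ≤ pmax(m). -/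
/-!
Sliding a length-`m` window one position to the right removes one letter and adds one, so the
number of `a`s (encoded as `true`) changes by at most one. A function on `ℕ` with steps of size at most one takes
every value between any two of its values (a discrete intermediate value theorem), so the set of
window counts is a finite interval of `ℕ`, namely `[pmin(m), pmax(m)]`. The number of `b`s in a
window is `m` minus the number of `a`s, which gives the query characterisation.
-/

open Set

section DiscreteIVT

variable {f : ℕ → ℕ}

theorem Nat.exists_mem_Icc_eq_of_mem_uIcc (hf : ∀ k, f (k + 1) ≤ f k + 1 ∧ f k ≤ f (k + 1) + 1)
    {a b : ℕ} (hab : a ≤ b) {x : ℕ} (hx : x ∈ uIcc (f a) (f b)) : ∃ c ∈ Icc a b, f c = x := by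
  induction b, hab using Nat.le_induction with
  | base => exact ⟨a, left_mem_Icc.2 le_rfl, by simp_all⟩
  | succ b hab ih =>
    by_cases hxb : x ∈ uIcc (f a) (f b)
    · obtain ⟨c, hc, rfl⟩ := ih hxb
      exact ⟨c, Icc_subset_Icc_right b.le_succ hc, rfl⟩
    · refine ⟨b + 1, right_mem_Icc.2 (by omega), ?_⟩
      have := hf b
      simp only [mem_uIcc] at hx hxb
      omega

theorem Set.OrdConnected.image_of_step_le_one
    (hf : ∀ k, f (k + 1) ≤ f k + 1 ∧ f k ≤ f (k + 1) + 1) {I : Set ℕ} (hI : I.OrdConnected) :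
    (f '' I).OrdConnected := by
  refine ⟨?_⟩
  rintro _ ⟨a, ha, rfl⟩ _ ⟨b, hb, rfl⟩ x hx
  rcases le_total a b with hab | hba
  · obtain ⟨c, hc, rfl⟩ := Nat.exists_mem_Icc_eq_of_mem_uIcc hf hab (Icc_subset_uIcc hx)
    exact ⟨c, hI.out ha hb hc, rfl⟩
  · obtain ⟨c, hc, rfl⟩ := Nat.exists_mem_Icc_eq_of_mem_uIcc hf hba (Icc_subset_uIcc' hx)
    exact ⟨c, hI.out hb ha hc, rfl⟩

end DiscreteIVT

namespace List

variable {α : Type*} [BEq α] (l : List α) (a : α) (m : ℕ)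

theorem count_take_tail_le : (l.tail.take m).count a ≤ (l.take m).count a + 1 := by
  rcases l with _ | ⟨b, l⟩ <;> rcases m with _ | m
  case cons.succ =>
    have : (l[m]?.toList).count a ≤ 1 := count_le_length.trans (by cases l[m]? <;> simp)
    rw [tail_cons, take_succ_cons, take_add_one, count_append, count_cons]
    omega
  all_goals simp

theorem count_take_le_count_take_tail : (l.take m).count a ≤ (l.tail.take m).count a + 1 := by
  rcases l with _ | ⟨b, l⟩ <;> rcases m with _ | m
  case cons.succ =>
    have := (take_sublist_take_left (l := l) (m.le_add_right 1)).count_le a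
    rw [tail_cons, take_succ_cons, count_cons]
    split <;> omega
  all_goals simp

end List

theorem stmt2_general (s : List Bool) (m : ℕ) (hmn : m ≤ s.length) :
    (({x | ∃ i, i + m ≤ s.length ∧ ((s.drop i).take m).count true = x} : Set ℕ) =
      Set.Icc (sInf {x | ∃ i, i + m ≤ s.length ∧ ((s.drop i).take m).count true = x})
        (sSup {x | ∃ i, i + m ≤ s.length ∧ ((s.drop i).take m).count true = x})) ∧
    ∀ x y : ℕ, x + y = m →
      ((∃ i, i + m ≤ s.length ∧ ((s.drop i).take m).count true = x ∧
          ((s.drop i).take m).count false = y) ↔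
        sInf {x | ∃ i, i + m ≤ s.length ∧ ((s.drop i).take m).count true = x} ≤ x ∧
        x ≤ sSup {x | ∃ i, i + m ≤ s.length ∧ ((s.drop i).take m).count true = x}) := by
  set S : Set ℕ := {x | ∃ i, i + m ≤ s.length ∧ ((s.drop i).take m).count true = x}
  set f : ℕ → ℕ := fun i => ((s.drop i).take m).count true
  have hS : S = f '' {i | i + m ≤ s.length} := rfl
  have hstep (k : ℕ) : f (k + 1) ≤ f k + 1 ∧ f k ≤ f (k + 1) + 1 := by
    simp only [f, ← List.tail_drop]
    exact ⟨List.count_take_tail_le .., List.count_take_le_count_take_tail ..⟩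
  have hIcc : S = Icc (sInf S) (sSup S) := by
    have hne : S.Nonempty := ⟨f 0, 0, by simpa using hmn, rfl⟩
    have hbdd : BddAbove S := ⟨m, by
      rintro _ ⟨i, -, rfl⟩
      exact List.count_le_length.trans (List.length_take_le _ _)⟩
    refine (hne.ordConnected_iff_of_bdd (OrderBot.bddBelow S) hbdd).1 ?_
    refine hS ▸ OrdConnected.image_of_step_le_one hstep ⟨fun i _ j hj k hk => ?_⟩
    exact (Nat.add_le_add_right hk.2 m).trans hj
  refine ⟨hIcc, fun x y hxy => ?_⟩
  rw [← Set.mem_Icc, ← hIcc]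
  constructor
  · rintro ⟨i, hi, hx, -⟩
    exact ⟨i, hi, hx⟩
  · rintro ⟨i, hi, hx⟩
    refine ⟨i, hi, hx, ?_⟩
    have := List.count_true_add_count_false ((s.drop i).take m)
    simp only [List.length_take, List.length_drop] at this
    omega

/-- The set of a-counts (`a` = `true`) of length-`m` windows of a binary string `s` is the
interval `[pmin(m), pmax(m)]`; consequently a Parikh vector `(x, y)` with `x + y = m`
occurs in `s` iff `pmin(m) ≤ x ≤ pmax(m)`. -/
theorem stmt2 (s : List Bool) (m : ℕ) (hm : 1 ≤ m) (hmn : m ≤ s.length) :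
    (({x | ∃ i, i + m ≤ s.length ∧ ((s.drop i).take m).count true = x} : Set ℕ) =
      Set.Icc (sInf {x | ∃ i, i + m ≤ s.length ∧ ((s.drop i).take m).count true = x})
        (sSup {x | ∃ i, i + m ≤ s.length ∧ ((s.drop i).take m).count true = x})) ∧
    ∀ x y : ℕ, x + y = m →
      ((∃ i, i + m ≤ s.length ∧ ((s.drop i).take m).count true = x ∧
          ((s.drop i).take m).count false = y) ↔
        sInf {x | ∃ i, i + m ≤ s.length ∧ ((s.drop i).take m).count true = x} ≤ x ∧
        x ≤ sSup {x | ∃ i, i + m ≤ s.length ∧ ((s.drop i).take m).count true = x}) :=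
  stmt2_general s m hmn
end

section
/- Suppose L is a position such that no occurrence of the query Parikh vector q starts at a position ≤ L. If q occurs at positions (i+1, j) with i ≥ L, then firstfit(prv(L) + q) ≤ j. In particular, any occurrence of q ending before firstfit(prv(L)+q) must start at a position ≤ L. -/
lemma count_take_split {σ : ℕ} (s : List (Fin σ)) (i j : ℕ) (hij : i ≤ j) (k : Fin σ) :
    (s.take j).count k = (s.take i).count k + ((s.drop i).take (j - i)).count k := by
  have h : s.take j = s.take i ++ (s.drop i).take (j - i) := by
    rw [← List.take_add]
    congr 1
    omega
  rw [h, List.count_append]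

lemma count_take_mono {σ : ℕ} (s : List (Fin σ)) (a b : ℕ) (hab : a ≤ b) (k : Fin σ) :
    (s.take a).count k ≤ (s.take b).count k := by
  have h : s.take a = (s.take b).take a := by rw [List.take_take, min_eq_left hab]
  rw [h]
  exact ((s.take b).take_sublist a).count_le k

/-- If no occurrence of `q` starts at a position `≤ L` (i.e. at `(i'+1, j')` with `i' < L`),
and `q` occurs at `(i+1, j)` with `i ≥ L`, then `firstfit(prv(L) + q) ≤ j`.
Moreover, every occurrence of `q` ending before `firstfit(prv(L) + q)` starts at a
position `≤ L`. -/
theorem stmt10 {σ : ℕ} (s : List (Fin σ)) (q : Fin σ → ℕ) (L i j : ℕ)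
    (hL : ∀ i' j', i' ≤ j' → i' < L → ¬ ∀ k, ((s.drop i').take (j' - i')).count k = q k)
    (hiL : L ≤ i) (hij : i ≤ j) (hj : j ≤ s.length)
    (hocc : ∀ k, ((s.drop i).take (j - i)).count k = q k) :
    sInf {j' | ∀ k, (s.take L).count k + q k ≤ (s.take j').count k} ≤ j ∧
    ∀ i' j', i' ≤ j' →
      j' < sInf {j' | ∀ k, (s.take L).count k + q k ≤ (s.take j').count k} →
      (∀ k, ((s.drop i').take (j' - i')).count k = q k) → i' < L := by
  have key : ∀ i' j', L ≤ i' → i' ≤ j' →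
      (∀ k, ((s.drop i').take (j' - i')).count k = q k) →
      j' ∈ {j' | ∀ k, (s.take L).count k + q k ≤ (s.take j').count k} := by
    intro i' j' hLi' hi'j' hocc' k
    rw [count_take_split s i' j' hi'j', hocc' k]
    exact Nat.add_le_add_right (count_take_mono s L i' hLi' k) _
  refine ⟨Nat.sInf_le (key i j hiL hij hocc), ?_⟩
  intro i' j' hi'j' hlt hocc'
  by_contra h
  exact absurd (Nat.sInf_le (key i' j' (le_of_not_gt h) hi'j' hocc')) (not_le_of_gt hlt)
end

section
/- Jumping Algorithm invariant: if prv(R) ≥ q and L = firstfit(prv(R) - q) satisfies R - L = |q|, then prv(R) - prv(L) = q, i.e., (L+1, R) is an occurrence of q. -/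
lemma sum_count_eq_length {σ : ℕ} (l : List (Fin σ)) :
    ∑ k, l.count k = l.length := by
  induction l with
  | nil => simp
  | cons a t ih =>
    simp [List.count_cons, Finset.sum_add_distrib, ih, add_comm]

/-- Jumping Algorithm invariant: if `prv(R) ≥ q` and `L = firstfit(prv(R) - q)` satisfies
`R - L = |q|`, then `prv(R) - prv(L) = q`, i.e. `(L+1, R)` is an occurrence of `q`. -/
theorem stmt13 {σ : ℕ} (s : List (Fin σ)) (q : Fin σ → ℕ) (L R : ℕ)
    (hR : R ≤ s.length)
    (hq : ∀ k, q k ≤ (s.take R).count k)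
    (hLdef : L = sInf {i | ∀ k, (s.take R).count k - q k ≤ (s.take i).count k})
    (hlen : R - L = ∑ k, q k) :
    (∀ k, (s.take R).count k = (s.take L).count k + q k) ∧
    (∀ k, ((s.drop L).take (R - L)).count k = q k) := by
  set S : Set ℕ := {i | ∀ k, (s.take R).count k - q k ≤ (s.take i).count k} with hS
  have hRS : R ∈ S := fun k => Nat.sub_le _ _
  have hLmem : L ∈ S := hLdef ▸ Nat.sInf_mem ⟨R, hRS⟩
  have hLR : L ≤ R := hLdef ▸ Nat.sInf_le hRS
  have h1 : ∀ k, (s.take R).count k ≤ (s.take L).count k + q k := by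
    intro k
    exact Nat.sub_le_iff_le_add.mp (hLmem k)
  -- sums
  have hsumR : ∑ k, (s.take R).count k = R := by
    rw [sum_count_eq_length, List.length_take, min_eq_left hR]
  have hsumL : ∑ k, (s.take L).count k = L := by
    rw [sum_count_eq_length, List.length_take, min_eq_left (hLR.trans hR)]
  have hsums : ∑ k, (s.take R).count k = ∑ k, ((s.take L).count k + q k) := by
    rw [Finset.sum_add_distrib, hsumR, hsumL, ← hlen]
    omega
  have heq : ∀ k, (s.take R).count k = (s.take L).count k + q k := by
    intro k
    by_contra hne
    have hlt : (s.take R).count k < (s.take L).count k + q k :=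
      lt_of_le_of_ne (h1 k) hne
    have : ∑ k, (s.take R).count k < ∑ k, ((s.take L).count k + q k) :=
      Finset.sum_lt_sum (fun i _ => h1 i) ⟨k, Finset.mem_univ k, hlt⟩
    omega
  refine ⟨heq, fun k => ?_⟩
  have hsplit : s.take R = s.take L ++ (s.drop L).take (R - L) := by
    rw [← List.take_add]
    congr 1
    omega
  have := heq k
  rw [hsplit, List.count_append] at this
  omega
end

section
/- In the Jumping Algorithm, consecutive L values strictly increase: whether the update is L ← L+1 (after reporting an occurrence) or L ← firstfit(prv(R) - q) with prv(R) - prv(L) > q strictly in some component, in both cases the new value of L is strictly greater than the old value. -/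
/-- Consecutive `L` values strictly increase: after reporting an occurrence the update is
`L ← L + 1 > L`; otherwise, with `R = firstfit(prv(L) + q)` finite and
`prv(R) - prv(L) ≠ q` (so it exceeds `q` in some component), the update
`L ← firstfit(prv(R) - q)` also yields a value `> L`. -/
theorem stmt14 {σ : ℕ} (s : List (Fin σ)) (q : Fin σ → ℕ) (L R : ℕ)
    (hq : q ≠ 0) (hL : L ≤ s.length)
    (hne : {j | ∀ k, (s.take L).count k + q k ≤ (s.take j).count k}.Nonempty)
    (hRdef : R = sInf {j | ∀ k, (s.take L).count k + q k ≤ (s.take j).count k})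
    (hneq : ¬ ∀ k, (s.take R).count k = (s.take L).count k + q k) :
    L < L + 1 ∧
    L < sInf {i | ∀ k, (s.take R).count k - q k ≤ (s.take i).count k} := by
  have hR : ∀ k, (s.take L).count k + q k ≤ (s.take R).count k := by
    rw [hRdef]; exact Nat.sInf_mem hne
  refine ⟨Nat.lt_succ_self L, ?_⟩
  by_contra h
  push_neg at h
  set S := {i | ∀ k, (s.take R).count k - q k ≤ (s.take i).count k} with hS
  have hSne : S.Nonempty := by
    refine ⟨s.length, fun k => ?_⟩
    simp only [List.take_length]
    exact le_trans (Nat.sub_le _ _) ((List.take_sublist R s).count_le k)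
  have hmem : sInf S ∈ S := Nat.sInf_mem hSne
  -- counts of take (sInf S) are ≤ counts of take L
  have hmono : ∀ k, (s.take (sInf S)).count k ≤ (s.take L).count k := by
    intro k
    have : s.take (sInf S) = (s.take L).take (sInf S) := by
      rw [List.take_take, min_eq_left h]
    rw [this]
    exact (List.take_sublist _ _).count_le k
  apply hneq
  intro k
  have h1 : (s.take R).count k - q k ≤ (s.take L).count k :=
    le_trans (hmem k) (hmono k)
  have h2 : (s.take L).count k + q k ≤ (s.take R).count k := hR k
  omega
end

section
/- There exist strings of every even length n on which the Jumping Algorithm performs Θ(n) iterations: for s = (ab)^{n/2} and q = (2,0), the algorithm executes n/2 jumps; equivalently, the query Parikh vector (2,0) does not occur in (ab)^{n/2}, and firstfit(prv(2i) + (2,0)) - 2i = 3 for all i with 2i+3 ≤ n, forcing each L-update to advance L by exactly 2. -/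
/-!
The prefix of length `j` of `(ab)^k` contains `min ⌈j/2⌉ k` letters `a` and `min ⌊j/2⌋ k`
letters `b`. Hence any two consecutive positions contain at most one `a`, and the shortest
prefix with at least `i + 2` letters `a` and `i` letters `b` has length `2i + 3`.
-/

namespace List

variable {α : Type*} {a b : α}

theorem flatten_replicate_pair_succ (k : ℕ) :
    (replicate (k + 1) [a, b]).flatten = a :: b :: (replicate k [a, b]).flatten := by
  simp [replicate_succ]

variable [BEq α] [LawfulBEq α]

theorem count_take_flatten_replicate_pair_left (hab : a ≠ b) (k j : ℕ) :
    (((replicate k [a, b]).flatten).take j).count a = min ((j + 1) / 2) k := by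
  induction k generalizing j with
  | zero => simp
  | succ k ih =>
    rw [flatten_replicate_pair_succ]
    rcases j with _ | _ | j
    · simp
    · simp
    · rw [take_succ_cons, take_succ_cons, count_cons_self, count_cons_of_ne hab.symm, ih]
      omega

theorem count_take_flatten_replicate_pair_right (hab : a ≠ b) (k j : ℕ) :
    (((replicate k [a, b]).flatten).take j).count b = min (j / 2) k := by
  induction k generalizing j with
  | zero => simp
  | succ k ih =>
    rw [flatten_replicate_pair_succ]
    rcases j with _ | _ | j
    · simp
    · rw [take_succ_cons, take_zero, count_cons_of_ne hab, count_nil]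
      omega
    · rw [take_succ_cons, take_succ_cons, count_cons_of_ne hab, count_cons_self, ih]
      omega

theorem count_take_two_drop_flatten_replicate_pair_le (hab : a ≠ b) (k i : ℕ) :
    ((((replicate k [a, b]).flatten).drop i).take 2).count a ≤ 1 := by
  have hsplit := count_take_flatten_replicate_pair_left hab k (i + 2)
  rw [take_add, count_append, count_take_flatten_replicate_pair_left hab] at hsplit
  omega

theorem sInf_count_take_flatten_replicate_pair (hab : a ≠ b) {k i : ℕ} (hik : i + 2 ≤ k) :
    sInf {j | i + 2 ≤ (((replicate k [a, b]).flatten).take j).count a ∧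
      i ≤ (((replicate k [a, b]).flatten).take j).count b} = 2 * i + 3 := by
  have hset : {j | i + 2 ≤ (((replicate k [a, b]).flatten).take j).count a ∧
      i ≤ (((replicate k [a, b]).flatten).take j).count b} = Set.Ici (2 * i + 3) := by
    ext j
    simp only [Set.mem_ofPred_eq, Set.mem_Ici, count_take_flatten_replicate_pair_left hab,
      count_take_flatten_replicate_pair_right hab]
    omega
  rw [hset, csInf_Ici]

end List

/-- On `s = (ab)^k` (with `a` = `true`, `b` = `false`) and `q = (2,0)`:
the Parikh vector `(2,0)` does not occur in `s` (no window of length 2 consists of two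
`a`'s); `prv(2i) = (i, i)`; and `firstfit(prv(2i) + (2,0)) - 2i = 3` whenever
`2i + 3 ≤ 2k`, so each jump advances `L` by exactly `2` and the algorithm performs
`Θ(n)` iterations. -/
theorem stmt16 (k : ℕ) :
    (¬ ∃ i, i + 2 ≤ ((List.replicate k [true, false]).flatten).length ∧
        ((((List.replicate k [true, false]).flatten).drop i).take 2).count true = 2) ∧
    (∀ i, 2 * i ≤ 2 * k →
      (((List.replicate k [true, false]).flatten).take (2 * i)).count true = i ∧
      (((List.replicate k [true, false]).flatten).take (2 * i)).count false = i) ∧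
    (∀ i, 2 * i + 3 ≤ 2 * k →
      sInf {j | i + 2 ≤ (((List.replicate k [true, false]).flatten).take j).count true ∧
        i ≤ (((List.replicate k [true, false]).flatten).take j).count false}
        - 2 * i = 3) := by
  have hab : true ≠ false := by decide
  refine ⟨fun ⟨i, _, htwo⟩ => ?_, fun i hi => ?_, fun i hi => ?_⟩
  · have := List.count_take_two_drop_flatten_replicate_pair_le hab k i
    omega
  · rw [List.count_take_flatten_replicate_pair_left hab,
      List.count_take_flatten_replicate_pair_right hab]
    omega
  · rw [List.sInf_count_take_flatten_replicate_pair hab (by omega)]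
    omega
end

section
/- For a string s over Σ, the inverted table entries satisfy: for every character a_k and count j ≥ 1 with j ≤ (total count of a_k in s), I[k][j] := min{ i : prv(i)_k ≥ j } is the position of the j-th occurrence of a_k in s, and firstfit(p) = max_{k} I[k][p_k] whenever p_k ≤ total count of a_k for all k (with I[k][0] = 0). -/
private lemma countTakeMono {α : Type*} [DecidableEq α] (s : List α) (a : α) :
    Monotone fun i => (s.take i).count a := by
  intro i j h
  have : (s.take i).Sublist (s.take j) := by
    have := List.take_sublist i (s.take j)
    rwa [List.take_take, min_eq_left h] at this
  exact this.count_le a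

private lemma countTakeSucc {α : Type*} [DecidableEq α] (s : List α) (a : α) (n : ℕ)
    (hn : n < s.length) :
    (s.take (n+1)).count a = (s.take n).count a + if s[n] = a then 1 else 0 := by
  rw [List.take_succ, List.count_append]
  simp [List.getElem?_eq_getElem hn, List.count_singleton']

/-- Inverted table: `I[k][j] := min { i | prv(i)_k ≥ j }` is the position of the `j`-th
occurrence of character `k` (for `1 ≤ j ≤ count of k in s`), i.e. the prefix of that
length contains exactly `j` occurrences of `k` and its last character is `k`; and
`firstfit(p) = max_k I[k][p_k]` whenever `p k` is at most the total count of `k` for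
all `k` (with `I[k][0] = 0`). -/
theorem stmt17 {σ : ℕ} (s : List (Fin σ)) (p : Fin σ → ℕ) (k : Fin σ) (j : ℕ)
    (hj1 : 1 ≤ j) (hj2 : j ≤ s.count k) :
    ((s.take (sInf {i | j ≤ (s.take i).count k})).count k = j ∧
      s[(sInf {i | j ≤ (s.take i).count k}) - 1]? = some k) ∧
    ((∀ k', p k' ≤ s.count k') →
      sInf {j' | ∀ k', p k' ≤ (s.take j').count k'} =
        Finset.univ.sup (fun k' => sInf {i | p k' ≤ (s.take i).count k'})) := by
  set N := sInf {i | j ≤ (s.take i).count k} with hN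
  have hlenmem : s.length ∈ {i | j ≤ (s.take i).count k} := by
    simpa [List.take_length] using hj2
  have hNmem : N ∈ {i | j ≤ (s.take i).count k} := Nat.sInf_mem ⟨_, hlenmem⟩
  have hNle : N ≤ s.length := Nat.sInf_le hlenmem
  have hNpos : 1 ≤ N := by
    by_contra h
    push_neg at h
    interval_cases N
    · simp only [Set.mem_setOf_eq, List.take_zero, List.count_nil] at hNmem
      omega
  have hprev : ¬ (N - 1 ∈ {i | j ≤ (s.take i).count k}) :=
    Nat.notMem_of_lt_sInf (by omega)
  simp only [Set.mem_setOf_eq, not_le] at hNmem hprev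
  have hidx : N - 1 < s.length := by omega
  have hsucc := countTakeSucc s k (N - 1) hidx
  rw [show N - 1 + 1 = N by omega] at hsucc
  have hk : s[N-1] = k := by
    by_contra h
    rw [hsucc] at hNmem
    rw [if_neg h] at hNmem
    omega
  constructor
  · constructor
    · have heq : (s.take N).count k = (s.take (N-1)).count k + 1 := by
        rw [hsucc]; simp [hk]
      omega
    · rw [List.getElem?_eq_getElem hidx, hk]
  · intro hp
    have hSne : ∀ k' : Fin σ, (s.length) ∈ {i | p k' ≤ (s.take i).count k'} := by
      intro k'; simpa [List.take_length] using hp k'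
    set g : Fin σ → ℕ := fun k' => sInf {i | p k' ≤ (s.take i).count k'} with hg
    have hgmem : ∀ k', g k' ∈ {i | p k' ≤ (s.take i).count k'} :=
      fun k' => Nat.sInf_mem ⟨_, hSne k'⟩
    apply le_antisymm
    · apply Nat.sInf_le
      intro k'
      calc p k' ≤ (s.take (g k')).count k' := hgmem k'
        _ ≤ (s.take (Finset.univ.sup g)).count k' :=
          countTakeMono s k' (Finset.le_sup (Finset.mem_univ k'))
    · apply Finset.sup_le
      intro k' _
      apply Nat.sInf_le
      have hT : sInf {j' | ∀ k', p k' ≤ (s.take j').count k'} ∈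
          {j' | ∀ k', p k' ≤ (s.take j').count k'} :=
        Nat.sInf_mem ⟨s.length, fun k' => by simpa [List.take_length] using hp k'⟩
      exact hT k'
end
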